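/- For ρ > 0 define F(ρ) := √ρ · (∫₀¹ (1 − e^{−4ρ(u−u²)}) du / (4ρ)) / (∫₀¹ ((1/(8ρ))·(e^{4ρ(u−u²)} − 1) − (u−u²)/2)^{1/2} · e^{−4ρ(u−u²)} du). Then F(ρ) = 1 + (4/15)ρ + (2/45)ρ² + o(ρ²) as ρ → 0⁺, i.e. (F(ρ) − 1 − (4/15)ρ − (2/45)ρ²)/ρ² → 0 as ρ → 0⁺. -/

import Mathlib

/-!
With `t = ρ (u - u²) ∈ [0, ρ/4]` the powers of `ρ` cancel, and `Fspeed ρ` is the quotient of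
`∫₀¹ ψ(ρ(u - u²)) du` by `∫₀¹ φ(ρ(u - u²)) du`, where `ψ t = (1 - e^{-4t})/4` and
`φ t = √((e^{4t} - 1 - 4t)/8) · e^{-4t}`. Truncated exponential series give
`ψ t = t - 2t² + (8/3)t³ + O(t⁴)` and `φ t = t - (10/3)t² + (52/9)t³ + O(t⁴)` with explicit
constants on `[0, 1/4]` (for the square root, `|√a - y| · y ≤ |a - y²|`). Integrating against the
moments `∫₀¹ (u - u²)^k = 1/6, 1/30, 1/140` yields `ρ A(ρ) + O(ρ⁴)` and `ρ B(ρ) + O(ρ⁴)` for the two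
integrals, and `A / B = 1 + 4ρ/15 + 2ρ²/45 + O(ρ³)`; so `Fspeed ρ` differs from that polynomial
by `O(ρ³)`.
-/

open Real Filter Topology intervalIntegral

noncomputable def Fspeed (ρ : ℝ) : ℝ :=
  Real.sqrt ρ *
    ((∫ u in (0:ℝ)..1, (1 - Real.exp (-(4 * ρ) * (u - u ^ 2)))) / (4 * ρ)) /
    (∫ u in (0:ℝ)..1,
      Real.sqrt (1 / (8 * ρ) * (Real.exp (4 * ρ * (u - u ^ 2)) - 1) - (u - u ^ 2) / 2) *
        Real.exp (-(4 * ρ) * (u - u ^ 2)))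

lemma abs_exp_neg_four_mul_sub_quadratic_le {t : ℝ} (ht0 : 0 ≤ t) (ht1 : t ≤ 1 / 4) :
    |exp (-(4 * t)) - (1 - 4 * t + 8 * t ^ 2)| ≤ 15 * t ^ 3 := by
  have hx : |-(4 * t)| ≤ 1 := by rw [abs_neg, abs_of_nonneg (by positivity)]; linarith
  have h := Real.exp_bound hx (n := 3) (by norm_num)
  norm_num [Finset.sum_range_succ, Nat.factorial, abs_of_nonneg ht0] at h
  have hc : (4 * t) ^ 3 * (2 / 9) ≤ 15 * t ^ 3 := by nlinarith [pow_nonneg ht0 3]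
  refine (le_of_eq ?_).trans (h.trans hc)
  ring_nf

lemma abs_exp_neg_four_mul_sub_cubic_le {t : ℝ} (ht0 : 0 ≤ t) (ht1 : t ≤ 1 / 4) :
    |exp (-(4 * t)) - (1 - 4 * t + 8 * t ^ 2 - 32 / 3 * t ^ 3)| ≤ 14 * t ^ 4 := by
  have hx : |-(4 * t)| ≤ 1 := by rw [abs_neg, abs_of_nonneg (by positivity)]; linarith
  have h := Real.exp_bound hx (n := 4) (by norm_num)
  norm_num [Finset.sum_range_succ, Nat.factorial, abs_of_nonneg ht0] at h
  have hc : (4 * t) ^ 4 * (5 / 96) ≤ 14 * t ^ 4 := by nlinarith [pow_nonneg ht0 4]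
  refine (le_of_eq ?_).trans (h.trans hc)
  ring_nf

lemma abs_exp_four_mul_sub_quartic_le {t : ℝ} (ht0 : 0 ≤ t) (ht1 : t ≤ 1 / 4) :
    |exp (4 * t) - (1 + 4 * t + 8 * t ^ 2 + 32 / 3 * t ^ 3 + 32 / 3 * t ^ 4)| ≤ 11 * t ^ 5 := by
  have hx : |4 * t| ≤ 1 := by rw [abs_of_nonneg (by positivity)]; linarith
  have h := Real.exp_bound hx (n := 5) (by norm_num)
  norm_num [Finset.sum_range_succ, Nat.factorial, abs_of_nonneg ht0] at h
  have hc : (4 * t) ^ 5 * (1 / 100) ≤ 11 * t ^ 5 := by nlinarith [pow_nonneg ht0 5]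
  refine (le_of_eq ?_).trans (h.trans hc)
  ring_nf

lemma abs_sqrt_sub_mul_le {a y : ℝ} (ha : 0 ≤ a) (hy : 0 ≤ y) : |√a - y| * y ≤ |a - y ^ 2| := by
  have hfac : |a - y ^ 2| = |√a - y| * (√a + y) := by
    rw [← abs_of_nonneg (by positivity : 0 ≤ √a + y), ← abs_mul]
    congr 1
    linear_combination (sq_sqrt ha).symm
  rw [hfac]
  gcongr
  exact le_add_of_nonneg_left (sqrt_nonneg a)

lemma abs_sqrt_exp_four_mul_sub_le {t : ℝ} (ht0 : 0 ≤ t) (ht1 : t ≤ 1 / 4) :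
    |√((exp (4 * t) - 1 - 4 * t) / 8) - t * (1 + 2 / 3 * t + 4 / 9 * t ^ 2)| ≤ 3 * t ^ 4 := by
  rcases ht0.eq_or_lt with rfl | ht
  · simp
  have hty : t ≤ t * (1 + 2 / 3 * t + 4 / 9 * t ^ 2) := by nlinarith [pow_pos ht 3]
  set y := t * (1 + 2 / 3 * t + 4 / 9 * t ^ 2)
  have hrad : 0 ≤ (exp (4 * t) - 1 - 4 * t) / 8 := by
    have := add_one_le_exp (4 * t); linarith
  have hsq : |(exp (4 * t) - 1 - 4 * t) / 8 - y ^ 2| ≤ 3 * t ^ 5 := by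
    have hE := abs_exp_four_mul_sub_quartic_le ht0 ht1
    have hid : (exp (4 * t) - 1 - 4 * t) / 8 - y ^ 2 =
        (exp (4 * t) - (1 + 4 * t + 8 * t ^ 2 + 32 / 3 * t ^ 3 + 32 / 3 * t ^ 4)) / 8
          - (16 / 27 * t ^ 5 + 16 / 81 * t ^ 6) := by ring
    rw [hid]
    refine (abs_sub _ _).trans ?_
    rw [abs_div, abs_of_nonneg (by positivity : (0 : ℝ) ≤ 16 / 27 * t ^ 5 + 16 / 81 * t ^ 6)]
    nlinarith [pow_pos ht 5]
  refine le_of_mul_le_mul_right ?_ ht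
  calc _ ≤ |√((exp (4 * t) - 1 - 4 * t) / 8) - y| * y := by gcongr
    _ ≤ 3 * t ^ 5 := (abs_sqrt_sub_mul_le hrad (by linarith)).trans hsq
    _ = 3 * t ^ 4 * t := by ring

noncomputable def numIntegrand (t : ℝ) : ℝ := (1 - exp (-(4 * t))) / 4

noncomputable def denIntegrand (t : ℝ) : ℝ := √((exp (4 * t) - 1 - 4 * t) / 8) * exp (-(4 * t))

lemma continuous_numIntegrand : Continuous numIntegrand := by
  unfold numIntegrand; fun_prop

lemma continuous_denIntegrand : Continuous denIntegrand := by
  unfold denIntegrand; fun_prop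

lemma abs_numIntegrand_sub_le {t : ℝ} (ht0 : 0 ≤ t) (ht1 : t ≤ 1 / 4) :
    |numIntegrand t - (t - 2 * t ^ 2 + 8 / 3 * t ^ 3)| ≤ 7 / 2 * t ^ 4 := by
  have h := abs_exp_neg_four_mul_sub_cubic_le ht0 ht1
  have hid : numIntegrand t - (t - 2 * t ^ 2 + 8 / 3 * t ^ 3) =
      -(exp (-(4 * t)) - (1 - 4 * t + 8 * t ^ 2 - 32 / 3 * t ^ 3)) / 4 := by
    rw [numIntegrand]; ring
  rw [hid, abs_div, abs_neg, abs_of_pos (four_pos : (0 : ℝ) < 4)]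
  linarith

lemma abs_denIntegrand_sub_le {t : ℝ} (ht0 : 0 ≤ t) (ht1 : t ≤ 1 / 4) :
    |denIntegrand t - (t - 10 / 3 * t ^ 2 + 52 / 9 * t ^ 3)| ≤ 26 * t ^ 4 := by
  set r := √((exp (4 * t) - 1 - 4 * t) / 8)
  set E := exp (-(4 * t))
  set y := t * (1 + 2 / 3 * t + 4 / 9 * t ^ 2) with hy
  have hr : |r - y| ≤ 3 * t ^ 4 := abs_sqrt_exp_four_mul_sub_le ht0 ht1
  have hE : |E - (1 - 4 * t + 8 * t ^ 2)| ≤ 15 * t ^ 3 :=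
    abs_exp_neg_four_mul_sub_quadratic_le ht0 ht1
  have hE1 : |E| ≤ 1 := by
    rw [abs_of_pos (exp_pos _)]; exact exp_le_one_iff.2 (by linarith)
  have hy0 : 0 ≤ y := by positivity
  have hy1 : y ≤ 43 / 36 * t := by nlinarith [pow_nonneg ht0 3]
  have hprod : y * (1 - 4 * t + 8 * t ^ 2) - (t - 10 / 3 * t ^ 2 + 52 / 9 * t ^ 3) =
      32 / 9 * t ^ 4 + 32 / 9 * t ^ 5 := by
    ring
  have hsplit : denIntegrand t - (t - 10 / 3 * t ^ 2 + 52 / 9 * t ^ 3) =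
      (r - y) * E + y * (E - (1 - 4 * t + 8 * t ^ 2)) + (32 / 9 * t ^ 4 + 32 / 9 * t ^ 5) := by
    rw [← hprod, denIntegrand]; ring
  rw [hsplit]
  calc _ ≤ |r - y| * |E| + y * |E - (1 - 4 * t + 8 * t ^ 2)|
        + (32 / 9 * t ^ 4 + 32 / 9 * t ^ 5) := by
        refine (abs_add_le _ _).trans ?_
        rw [abs_of_nonneg (by positivity : (0 : ℝ) ≤ 32 / 9 * t ^ 4 + 32 / 9 * t ^ 5)]
        refine add_le_add ((abs_add_le _ _).trans ?_) le_rfl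
        rw [abs_mul, abs_mul, abs_of_nonneg hy0]
    _ ≤ 3 * t ^ 4 * 1 + 43 / 36 * t * (15 * t ^ 3) + (32 / 9 * t ^ 4 + 32 / 9 * t ^ 5) := by
        gcongr
    _ ≤ 26 * t ^ 4 := by nlinarith [pow_nonneg ht0 4]

lemma integral_cubic_u_sub_sq (a b c : ℝ) :
    ∫ u in (0 : ℝ)..1, (a * (u - u ^ 2) + b * (u - u ^ 2) ^ 2 + c * (u - u ^ 2) ^ 3) =
      a / 6 + b / 30 + c / 140 := by
  have hexp : ∀ u : ℝ, a * (u - u ^ 2) + b * (u - u ^ 2) ^ 2 + c * (u - u ^ 2) ^ 3 =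
      a * u ^ 1 + (b - a) * u ^ 2 + (c - 2 * b) * u ^ 3 + (b - 3 * c) * u ^ 4 + 3 * c * u ^ 5
        - c * u ^ 6 := fun u => by ring
  simp_rw [hexp]
  rw [integral_sub, integral_add, integral_add, integral_add, integral_add]
  all_goals try exact Continuous.intervalIntegrable (by fun_prop) _ _
  simp only [integral_const_mul, integral_pow]
  norm_num
  ring

lemma abs_integral_comp_sub_cubic_le {f : ℝ → ℝ} (hf : Continuous f) {a b c K ρ : ℝ} (hK : 0 ≤ K)
    (hρ0 : 0 ≤ ρ) (hρ1 : ρ ≤ 1)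
    (happrox : ∀ t, 0 ≤ t → t ≤ 1 / 4 → |f t - (a * t + b * t ^ 2 + c * t ^ 3)| ≤ K * t ^ 4) :
    |(∫ u in (0 : ℝ)..1, f (ρ * (u - u ^ 2))) - ρ * (a / 6 + b * ρ / 30 + c * ρ ^ 2 / 140)| ≤
      K * ρ ^ 4 := by
  have hint : ∀ g : ℝ → ℝ, Continuous g → IntervalIntegrable g MeasureTheory.volume 0 1 :=
    fun g hg => hg.intervalIntegrable 0 1
  have hbound : ∀ u ∈ Set.uIoc (0 : ℝ) 1, ‖f (ρ * (u - u ^ 2)) - (a * ρ * (u - u ^ 2)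
      + b * ρ ^ 2 * (u - u ^ 2) ^ 2 + c * ρ ^ 3 * (u - u ^ 2) ^ 3)‖ ≤ K * ρ ^ 4 := by
    intro u hu
    rw [Set.uIoc_of_le zero_le_one] at hu
    have hq0 : 0 ≤ u - u ^ 2 := by nlinarith [hu.1, hu.2]
    have hq1 : u - u ^ 2 ≤ 1 / 4 := by nlinarith [sq_nonneg (u - 1 / 2)]
    calc _ = |f (ρ * (u - u ^ 2)) - (a * (ρ * (u - u ^ 2)) + b * (ρ * (u - u ^ 2)) ^ 2
          + c * (ρ * (u - u ^ 2)) ^ 3)| := by rw [Real.norm_eq_abs]; ring_nf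
      _ ≤ K * (ρ * (u - u ^ 2)) ^ 4 := happrox _ (by positivity) (by nlinarith)
      _ ≤ K * ρ ^ 4 := by gcongr; nlinarith
  rw [show ρ * (a / 6 + b * ρ / 30 + c * ρ ^ 2 / 140) =
      a * ρ / 6 + b * ρ ^ 2 / 30 + c * ρ ^ 3 / 140 by ring,
    ← integral_cubic_u_sub_sq, ← integral_sub (hint _ (by fun_prop)) (hint _ (by fun_prop)),
    ← Real.norm_eq_abs]
  simpa using norm_integral_le_of_norm_le_const hbound

lemma Fspeed_eq_integral_div_integral {ρ : ℝ} (hρ : 0 < ρ) :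
    Fspeed ρ = (∫ u in (0 : ℝ)..1, numIntegrand (ρ * (u - u ^ 2))) /
      ∫ u in (0 : ℝ)..1, denIntegrand (ρ * (u - u ^ 2)) := by
  have hnum : ∫ u in (0 : ℝ)..1, (1 - exp (-(4 * ρ) * (u - u ^ 2))) =
      4 * ∫ u in (0 : ℝ)..1, numIntegrand (ρ * (u - u ^ 2)) := by
    rw [← integral_const_mul]
    congr 1 with u
    rw [numIntegrand]
    ring_nf
  have hden : ∫ u in (0 : ℝ)..1,
      √(1 / (8 * ρ) * (exp (4 * ρ * (u - u ^ 2)) - 1) - (u - u ^ 2) / 2) *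
        exp (-(4 * ρ) * (u - u ^ 2)) =
      (∫ u in (0 : ℝ)..1, denIntegrand (ρ * (u - u ^ 2))) / √ρ := by
    rw [← integral_div]
    congr 1 with u
    have hrad : 1 / (8 * ρ) * (exp (4 * ρ * (u - u ^ 2)) - 1) - (u - u ^ 2) / 2 =
        (exp (4 * (ρ * (u - u ^ 2))) - 1 - 4 * (ρ * (u - u ^ 2))) / 8 / ρ := by
      field_simp
      ring_nf
    rw [hrad, sqrt_div' _ hρ.le, denIntegrand]
    ring_nf
  have hsqrt : 0 < √ρ := sqrt_pos.2 hρ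
  rw [Fspeed, hnum, hden]
  field_simp
  rw [sq_sqrt hρ.le]

lemma abs_Fspeed_sub_le {ρ : ℝ} (hρ0 : 0 < ρ) (hρ1 : ρ ≤ 1 / 10) :
    |Fspeed ρ - 1 - 4 / 15 * ρ - 2 / 45 * ρ ^ 2| ≤ 256 * ρ ^ 3 := by
  set N := ∫ u in (0 : ℝ)..1, numIntegrand (ρ * (u - u ^ 2))
  set D := ∫ u in (0 : ℝ)..1, denIntegrand (ρ * (u - u ^ 2))
  set A := 1 / 6 - ρ / 15 + 2 / 105 * ρ ^ 2 with hA
  set B := 1 / 6 - ρ / 9 + 13 / 315 * ρ ^ 2 with hB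
  set P := 1 + 4 / 15 * ρ + 2 / 45 * ρ ^ 2 with hP
  have hN : |N - ρ * A| ≤ 7 / 2 * ρ ^ 4 := by
    convert abs_integral_comp_sub_cubic_le (a := 1) (b := -2) (c := 8 / 3) (K := 7 / 2)
      continuous_numIntegrand (by norm_num) hρ0.le (by linarith)
      fun t h0 h1 => by convert abs_numIntegrand_sub_le h0 h1 using 3; ring using 3
    ring
  have hD : |D - ρ * B| ≤ 26 * ρ ^ 4 := by
    convert abs_integral_comp_sub_cubic_le (a := 1) (b := -10 / 3) (c := 52 / 9) (K := 26)
      continuous_denIntegrand (by norm_num) hρ0.le (by linarith)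
      fun t h0 h1 => by convert abs_denIntegrand_sub_le h0 h1 using 3; ring using 3
    ring
  have hD_ge : ρ / 8 ≤ D := by
    nlinarith [(abs_le.1 hD).1, pow_pos hρ0 3, pow_pos hρ0 4]
  have hP1 : |P| ≤ 103 / 100 := by
    rw [abs_of_nonneg (by positivity)]; nlinarith
  -- `P` is the Taylor quotient of `A / B` up to order `ρ²`
  have hAPB : A - P * B = -(86 / 14175 * ρ ^ 3 + 26 / 14175 * ρ ^ 4) := by ring
  have hres : |N - P * D| ≤ 32 * ρ ^ 4 :=
    calc |N - P * D| = |(N - ρ * A) - P * (D - ρ * B) + ρ * (A - P * B)| := by ring_nf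
      _ ≤ |N - ρ * A| + |P| * |D - ρ * B| + |ρ * (A - P * B)| := by
        rw [← abs_mul]
        exact (abs_add_le _ _).trans (by gcongr; exact abs_sub _ _)
      _ ≤ 7 / 2 * ρ ^ 4 + 103 / 100 * (26 * ρ ^ 4) + ρ * ρ ^ 3 := by
        rw [hAPB, abs_mul, abs_neg, abs_of_pos hρ0,
          abs_of_nonneg (by positivity : (0 : ℝ) ≤ 86 / 14175 * ρ ^ 3 + 26 / 14175 * ρ ^ 4)]
        gcongr
        nlinarith [pow_pos hρ0 4]
      _ ≤ 32 * ρ ^ 4 := by nlinarith [pow_pos hρ0 4]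
  have hD0 : 0 < D := by linarith
  rw [Fspeed_eq_integral_div_integral hρ0,
    show N / D - 1 - 4 / 15 * ρ - 2 / 45 * ρ ^ 2 = (N - P * D) / D by field_simp; ring,
    abs_div, abs_of_pos hD0, div_le_iff₀ hD0]
  nlinarith [pow_pos hρ0 3]

lemma tendsto_div_sq_of_abs_le_mul_cube {g : ℝ → ℝ} {C : ℝ}
    (hg : ∀ᶠ ρ in 𝓝[>] 0, |g ρ| ≤ C * ρ ^ 3) :
    Tendsto (fun ρ => g ρ / ρ ^ 2) (𝓝[>] 0) (𝓝 0) := by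
  have hlin : Tendsto (fun ρ : ℝ => C * ρ) (𝓝[>] 0) (𝓝 0) := by
    simpa using ((continuous_const_mul C).tendsto 0).mono_left nhdsWithin_le_nhds
  refine squeeze_zero_norm' ?_ hlin
  filter_upwards [hg, self_mem_nhdsWithin] with ρ hρ (hρ0 : 0 < ρ)
  simp only [norm_div, norm_pow, Real.norm_eq_abs, abs_of_pos hρ0]
  rw [div_le_iff₀ (by positivity)]
  linarith

theorem speed_expansion :
    Tendsto (fun ρ : ℝ => (Fspeed ρ - 1 - 4 / 15 * ρ - 2 / 45 * ρ ^ 2) / ρ ^ 2)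
      (𝓝[>] 0) (𝓝 0) := by
  refine tendsto_div_sq_of_abs_le_mul_cube (C := 256) ?_
  filter_upwards [Ioo_mem_nhdsGT (by norm_num : (0 : ℝ) < 1 / 10)] with ρ hρ
  exact abs_Fspeed_sub_le hρ.1 hρ.2.le
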